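/- arXiv:2107.09774 — 3 statements merged into one kernel-verified Lean document; each statement's English description precedes it below -/
import Mathlib

section
/- The number of lattice paths from (0,0) to (M,N) with steps (1,1) and (-1,1) that never visit any point with x-coordinate less than a (where a ≤ 0) equals binom(N,(N-M)/2) - binom(N,(N-M)/2 + a - 1), for M ≥ a and N ≡ M mod 2. -/
open Finset

/-- The x-coordinate after the first `k` steps of a path encoded by `s : Fin N → Bool`
(`true` = step `(x,y) → (x+1,y+1)`, `false` = step `(x,y) → (x-1,y+1)`), starting at `x = 0`. -/
def pathPos {N : ℕ} (s : Fin N → Bool) (k : ℕ) : ℤ :=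
  ∑ i ∈ Finset.univ.filter (fun i : Fin N => (i : ℕ) < k), (if s i then (1 : ℤ) else -1)

/-- Binomial coefficient `binom n k` with integer lower argument, `0` out of range. -/
def ibinom (n : ℕ) (k : ℤ) : ℤ :=
  if 0 ≤ k then (n.choose k.toNat : ℤ) else 0

-- pathPos lemmas
lemma pathPos_stable {N : ℕ} (s : Fin N → Bool) {k : ℕ} (h : N ≤ k) :
    pathPos s k = pathPos s N := by
  unfold pathPos
  rw [Finset.filter_true_of_mem (fun i _ => lt_of_lt_of_le i.isLt h),
    Finset.filter_true_of_mem (fun i _ => i.isLt)]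

lemma pathPos_snoc {N : ℕ} (s : Fin N → Bool) (b : Bool) (k : ℕ) :
    pathPos (Fin.snoc s b) k = pathPos s k +
      (if N < k then (if b then (1:ℤ) else -1) else 0) := by
  unfold pathPos
  rw [Finset.sum_filter, Finset.sum_filter, Fin.sum_univ_castSucc]
  simp [Fin.snoc_castSucc, Fin.snoc_last]

lemma wall_snoc {N : ℕ} (s : Fin N → Bool) (b : Bool) (a : ℤ) :
    (∀ k, a ≤ pathPos (Fin.snoc s b) k) ↔
      (∀ k, a ≤ pathPos s k) ∧ a ≤ pathPos s N + (if b then (1:ℤ) else -1) := by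
  constructor
  · intro h
    refine ⟨fun k => ?_, ?_⟩
    · rcases le_or_gt k N with hk | hk
      · have := h k; rwa [pathPos_snoc, if_neg (by omega), add_zero] at this
      · rw [pathPos_stable s hk.le]
        have := h N; rwa [pathPos_snoc, if_neg (by omega), add_zero] at this
    · have := h (N + 1)
      rwa [pathPos_snoc, if_pos (by omega), pathPos_stable s (by omega)] at this
  · rintro ⟨h1, h2⟩ k
    rw [pathPos_snoc]
    rcases le_or_gt k N with hk | hk
    · rw [if_neg (by omega), add_zero]; exact h1 k
    · rw [if_pos hk, pathPos_stable s hk.le]; exact h2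

noncomputable def cnt (a M : ℤ) (N : ℕ) : ℕ :=
  Nat.card {s : Fin N → Bool // pathPos s N = M ∧ ∀ k : ℕ, a ≤ pathPos s k}

lemma cnt_of_lt {a M : ℤ} {N : ℕ} (h : M < a) : cnt a M N = 0 := by
  rw [cnt, Nat.card_eq_zero]
  left
  constructor
  rintro ⟨s, h1, h2⟩
  exact absurd (h1 ▸ h2 N) (not_le.mpr h)

lemma cnt_zero {a M : ℤ} (ha : a ≤ 0) : cnt a M 0 = if M = 0 then 1 else 0 := by
  have hp : ∀ (s : Fin 0 → Bool) (k : ℕ), pathPos s k = 0 := by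
    intro s k; unfold pathPos; simp
  by_cases hM : M = 0
  · subst hM
    rw [if_pos rfl]
    rw [cnt, Nat.card_eq_one_iff_unique]
    constructor
    · constructor
      rintro ⟨s, _⟩ ⟨t, _⟩
      ext i; exact absurd i.isLt (by omega)
    · exact ⟨⟨fun i => true, by simp [hp], fun k => by simp [hp, ha]⟩⟩
  · rw [if_neg hM, cnt, Nat.card_eq_zero]
    left
    constructor
    rintro ⟨s, h1, _⟩
    exact hM ((hp s 0).symm.trans h1).symm

def boolSplit {S : Type*} (p : Bool → S → Prop) :
    {x : Bool × S // p x.1 x.2} ≃ {s // p true s} ⊕ {s // p false s} where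
  toFun x := match x with
    | ⟨(true, s), h⟩ => Sum.inl ⟨s, h⟩
    | ⟨(false, s), h⟩ => Sum.inr ⟨s, h⟩
  invFun x := match x with
    | Sum.inl ⟨s, h⟩ => ⟨(true, s), h⟩
    | Sum.inr ⟨s, h⟩ => ⟨(false, s), h⟩
  left_inv := by rintro ⟨⟨(_|_), s⟩, h⟩ <;> rfl
  right_inv := by rintro (⟨s, h⟩ | ⟨s, h⟩) <;> rfl

lemma cnt_succ (a M : ℤ) (N : ℕ) (hM : a ≤ M) :
    cnt a M (N + 1) = cnt a (M - 1) N + cnt a (M + 1) N := by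
  have key : ∀ (x : Bool × (Fin N → Bool)),
      (pathPos x.2 N = M - (if x.1 then (1:ℤ) else -1) ∧ ∀ k, a ≤ pathPos x.2 k) ↔
      (pathPos ((Fin.snocEquiv (fun _ => Bool)) x) (N + 1) = M ∧
        ∀ k, a ≤ pathPos ((Fin.snocEquiv (fun _ => Bool)) x) k) := by
    rintro ⟨b, s⟩
    have hsn : (Fin.snocEquiv (fun _ : Fin (N+1) => Bool)) (b, s) = Fin.snoc s b := by
      ext i; simp [Fin.snocEquiv]
    rw [hsn, pathPos_snoc, if_pos (Nat.lt_succ_self N), pathPos_stable (k := N + 1) s (by omega),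
      wall_snoc]
    rcases b with _ | _
    · norm_num
      constructor
      · rintro ⟨h1, h2⟩; exact ⟨by omega, h2, by omega⟩
      · rintro ⟨h1, h2, h3⟩; exact ⟨by omega, h2⟩
    · norm_num
      constructor
      · rintro ⟨h1, h2⟩; exact ⟨by omega, h2, by omega⟩
      · rintro ⟨h1, h2, h3⟩; exact ⟨by omega, h2⟩
  have e1 : {x : Bool × (Fin N → Bool) //
        pathPos x.2 N = M - (if x.1 then (1:ℤ) else -1) ∧ ∀ k, a ≤ pathPos x.2 k} ≃
      {t : Fin (N+1) → Bool // pathPos t (N+1) = M ∧ ∀ k, a ≤ pathPos t k} :=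
    Equiv.subtypeEquiv (Fin.snocEquiv (fun _ => Bool)) key
  have e2 := boolSplit (fun b (s : Fin N → Bool) =>
    pathPos s N = M - (if b then (1:ℤ) else -1) ∧ ∀ k, a ≤ pathPos s k)
  rw [cnt, ← Nat.card_congr e1, Nat.card_congr e2, Nat.card_sum]
  congr 1

lemma ibinom_neg {n : ℕ} {k : ℤ} (h : k < 0) : ibinom n k = 0 := by
  rw [ibinom, if_neg (by omega)]

lemma ibinom_big {n : ℕ} {k : ℤ} (h : (n : ℤ) < k) : ibinom n k = 0 := by
  rw [ibinom, if_pos (by omega), Nat.choose_eq_zero_of_lt (by omega)]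
  simp

lemma ibinom_pascal (n : ℕ) (k : ℤ) :
    ibinom (n + 1) k = ibinom n k + ibinom n (k - 1) := by
  rcases lt_trichotomy k 0 with h | h | h
  · rw [ibinom_neg h, ibinom_neg h, ibinom_neg (by omega : k - 1 < 0)]
    ring
  · subst h
    have h0 : ibinom n (0 - 1 : ℤ) = 0 := ibinom_neg (by omega)
    rw [h0, ibinom, ibinom]
    simp
  · obtain ⟨m, rfl⟩ : ∃ m : ℕ, k = (m : ℤ) + 1 := ⟨(k - 1).toNat, by omega⟩
    rw [ibinom, ibinom, ibinom, if_pos (by omega), if_pos (by omega), if_pos (by omega)]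
    have h1 : ((m : ℤ) + 1).toNat = m + 1 := by omega
    have h2 : ((m : ℤ) + 1 - 1).toNat = m := by omega
    rw [h1, h2, Nat.choose_succ_succ']
    push_cast
    ring

lemma ibinom_symm (n : ℕ) (k : ℤ) (h0 : 0 ≤ k) (h : k ≤ (n : ℤ)) :
    ibinom n k = ibinom n ((n : ℤ) - k) := by
  rw [ibinom, ibinom, if_pos h0, if_pos (by omega)]
  have : ((n : ℤ) - k).toNat = n - k.toNat := by omega
  rw [this, Nat.choose_symm (by omega)]

lemma g_boundary (a : ℤ) (N : ℕ) (ha : a ≤ 0) (hpar : (2:ℤ) ∣ (N : ℤ) - (a - 1)) :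
    ibinom N (((N:ℤ) - (a - 1)) / 2) = ibinom N (((N:ℤ) - (a - 1)) / 2 + a - 1) := by
  obtain ⟨c, hc⟩ := hpar
  have hk : ((N:ℤ) - (a - 1)) / 2 = c := by omega
  rw [hk]
  rcases le_or_gt 0 (c + a - 1) with h | h
  · have h1 : c + a - 1 = (N:ℤ) - c := by omega
    rw [h1]
    exact ibinom_symm N c (by omega) (by omega)
  · rw [ibinom_neg h, ibinom_big (show (N:ℤ) < c by omega)]

lemma main_count (N : ℕ) : ∀ a M : ℤ, a ≤ 0 → a ≤ M → (2:ℤ) ∣ (N:ℤ) - M →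
    (cnt a M N : ℤ) = ibinom N (((N:ℤ) - M) / 2) - ibinom N (((N:ℤ) - M) / 2 + a - 1) := by
  induction N with
  | zero =>
    intro a M ha hM hdvd
    obtain ⟨c, hc⟩ := hdvd
    push_cast at hc
    have hk : ((0:ℕ):ℤ) = 0 := by norm_num
    rw [cnt_zero ha]
    by_cases h : M = 0
    · subst h
      have h0 : (((0:ℕ):ℤ) - 0) / 2 = 0 := by norm_num
      rw [if_pos rfl, h0, ibinom_neg (by omega : (0:ℤ) + a - 1 < 0)]
      rw [ibinom, if_pos le_rfl]
      norm_num
    · rw [if_neg h]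
      have hkc : (((0:ℕ):ℤ) - M) / 2 = c := by omega
      rw [hkc]
      rcases lt_or_gt_of_ne h with hM0 | hM0
      · -- M < 0, so a ≤ M < 0, c > 0
        rw [ibinom_big (show ((0:ℕ):ℤ) < c by push_cast; omega),
          ibinom_neg (show c + a - 1 < 0 by omega)]
        norm_num
      · -- M > 0, c < 0
        rw [ibinom_neg (show c < 0 by omega), ibinom_neg (show c + a - 1 < 0 by omega)]
        norm_num
  | succ N ih =>
    intro a M ha hM hdvd
    obtain ⟨c, hc⟩ := hdvd
    push_cast at hc
    have h1 := ih a (M + 1) ha (by omega) ⟨c - 1, by omega⟩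
    have d1 : ((N:ℤ) - (M + 1)) / 2 = c - 1 := by omega
    rw [d1] at h1
    have d1' : c - 1 + a - 1 = c + a - 2 := by ring
    rw [d1'] at h1
    have h2 : (cnt a (M - 1) N : ℤ) = ibinom N c - ibinom N (c + a - 1) := by
      rcases eq_or_lt_of_le hM with hMa | hMa
      · rw [cnt_of_lt (by omega : M - 1 < a)]
        have hb := g_boundary a N ha ⟨c, by omega⟩
        have e1 : ((N:ℤ) - (a - 1)) / 2 = c := by omega
        rw [e1] at hb
        rw [hb]
        norm_num
      · have := ih a (M - 1) ha (by omega) ⟨c, by omega⟩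
        have e1 : ((N:ℤ) - (M - 1)) / 2 = c := by omega
        rwa [e1] at this
    rw [cnt_succ a M N hM]
    push_cast
    rw [h1, h2]
    have e2 : (((N:ℕ):ℤ) + 1 - M) / 2 = c := by omega
    rw [e2, ibinom_pascal, ibinom_pascal]
    have e3 : c + a - 1 - 1 = c + a - 2 := by ring
    rw [e3]
    ring

/-- The number of lattice paths from `(0,0)` to `(M,N)` never visiting `x < a` (for `a ≤ 0`)
equals `binom N ((N-M)/2) - binom N ((N-M)/2 + a - 1)`. -/
theorem left_wall_path_count (a M : ℤ) (N : ℕ) (ha : a ≤ 0) (hM : a ≤ M)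
    (h2 : (N : ℤ) ≡ M [ZMOD 2]) :
    (Nat.card {s : Fin N → Bool //
        pathPos s N = M ∧ ∀ k : ℕ, a ≤ pathPos s k} : ℤ) =
      ibinom N (((N : ℤ) - M) / 2) - ibinom N (((N : ℤ) - M) / 2 + a - 1) := by
  exact main_count N a M ha hM h2.symm.dvd
end

section
/- For d > 0 and M ≥ d with N ≡ M mod 2, the weighted number of lattice paths from (0,0) to (M,N), where steps are (1,1) and (-1,1), the step (d,y)→(d-1,y+1) is forbidden, the step (d+1,y)→(d,y+1) has weight 2, all other steps have weight 1, and the weight of a path is the product of its step weights, equals binom(N,(N-M)/2). -/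
open Finset

/-- The weight of a path: the product over its steps of the weight of each step, where the
weight of a step depends on the position `x` where it starts and its direction `b`. -/
def pathWeight {N : ℕ} (w : ℤ → Bool → ℤ) (s : Fin N → Bool) : ℤ :=
  ∏ i : Fin N, w (pathPos s i.val) (s i)

/-!
Encode the forbidden step as a step of weight `0`. Then `F_N(x)`, the weighted number of paths of
length `N` ending at `x`, satisfies `F_{N+1}(x) = F_N(x-1) + c(x+1) F_N(x+1)`, where
`c(d) = 0`, `c(d+1) = 2` and `c = 1` otherwise. Let `g_N(x)` be the number of unrestricted paths.
The reflection in `x = d`, i.e. `g_N(x)` for `x ≥ d` and `g_N(x) - g_N(2d - x)` for `x < d`,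
satisfies the same recurrence by Pascal's rule, and it has the same initial values because the
start `0` lies below `d`. So `F_N(M) = g_N(M)` for `M ≥ d`.
-/

lemma ibinom_succ (N : ℕ) (k : ℤ) : ibinom (N + 1) k = ibinom N k + ibinom N (k - 1) := by
  unfold ibinom
  rcases lt_trichotomy k 0 with hk | rfl | hk
  · rw [if_neg (by omega), if_neg (by omega), if_neg (by omega), add_zero]
  · simp
  · rw [if_pos hk.le, if_pos hk.le, if_pos (by omega), show k.toNat = (k - 1).toNat + 1 by omega,
      Nat.choose_succ_succ]
    push_cast
    ring

def freePathCount (N : ℕ) (x : ℤ) : ℤ :=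
  if ((N : ℤ) - x) % 2 = 0 then ibinom N (((N : ℤ) - x) / 2) else 0

lemma freePathCount_zero (x : ℤ) : freePathCount 0 x = if x = 0 then 1 else 0 := by
  unfold freePathCount ibinom
  split_ifs <;> simp_all [Nat.choose_eq_zero_iff]; omega

lemma freePathCount_succ (N : ℕ) (x : ℤ) :
    freePathCount (N + 1) x = freePathCount N (x - 1) + freePathCount N (x + 1) := by
  unfold freePathCount
  push_cast
  by_cases hx : ((N : ℤ) + 1 - x) % 2 = 0
  · rw [if_pos hx, if_pos (by omega), if_pos (by omega), ibinom_succ,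
      show (N : ℤ) - (x - 1) = N + 1 - x by ring,
      show ((N : ℤ) - (x + 1)) / 2 = (N + 1 - x) / 2 - 1 by omega]
  · rw [if_neg hx, if_neg (by omega), if_neg (by omega), add_zero]

section Snoc

variable {N : ℕ} (s : Fin N → Bool) (b : Bool)

lemma pathPos_snoc_of_le {k : ℕ} (hk : k ≤ N) :
    pathPos (Fin.snoc s b : Fin (N + 1) → Bool) k = pathPos s k := by
  unfold pathPos
  rw [sum_filter, sum_filter, Fin.sum_univ_castSucc]
  simp [hk]

lemma pathPos_snoc_succ :
    pathPos (Fin.snoc s b : Fin (N + 1) → Bool) (N + 1) = pathPos s N + if b then 1 else -1 := by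
  unfold pathPos
  rw [sum_filter, sum_filter, Fin.sum_univ_castSucc]
  simp

lemma pathWeight_snoc (w : ℤ → Bool → ℤ) :
    pathWeight w (Fin.snoc s b : Fin (N + 1) → Bool) = pathWeight w s * w (pathPos s N) b := by
  unfold pathWeight
  rw [Fin.prod_univ_castSucc]
  simp [pathPos_snoc_of_le, le_of_lt]

end Snoc

lemma pathWeight_ite_zero {N : ℕ} (P : ℤ → Bool → Prop) [∀ x b, Decidable (P x b)]
    (w : ℤ → Bool → ℤ) (s : Fin N → Bool) :
    pathWeight (fun x b => if P x b then 0 else w x b) s =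
      if ∀ i : Fin N, ¬ P (pathPos s i) (s i) then pathWeight w s else 0 := by
  rw [pathWeight, pathWeight, Fintype.prod_congr _ _ fun i => (ite_not _ _ _).symm]
  convert Fintype.prod_ite_zero

def walkSum (w : ℤ → Bool → ℤ) (N : ℕ) (x : ℤ) : ℤ :=
  ∑ s : Fin N → Bool with pathPos s N = x, pathWeight w s

lemma walkSum_zero (w : ℤ → Bool → ℤ) (x : ℤ) :
    walkSum w 0 x = if x = 0 then 1 else 0 := by
  rcases eq_or_ne x 0 with rfl | hx
  · simp [walkSum, pathPos, pathWeight]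
  · simp [walkSum, pathPos, pathWeight, hx, hx.symm]

lemma walkSum_succ (w : ℤ → Bool → ℤ) (N : ℕ) (x : ℤ) :
    walkSum w (N + 1) x =
      w (x - 1) true * walkSum w N (x - 1) + w (x + 1) false * walkSum w N (x + 1) := by
  simp only [walkSum, sum_filter, mul_sum]
  rw [← (Fin.snocEquiv _).sum_comp, Fintype.sum_prod_type, Fintype.sum_bool]
  refine congrArg₂ (· + ·) (sum_congr rfl fun s _ => ?_) (sum_congr rfl fun s _ => ?_) <;>
  simp only [Fin.snocEquiv, Equiv.coe_fn_mk, pathPos_snoc_succ, pathWeight_snoc] <;>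
  split_ifs <;> first | omega | simp_all [mul_comm]

/-- The type-1 filter weights, with the forbidden step `(d,y) → (d-1,y+1)` given weight `0`. -/
def filterWeight (d : ℤ) : ℤ → Bool → ℤ :=
  fun x b => if x = d ∧ b = false then 0 else if x = d + 1 ∧ b = false then 2 else 1

lemma filterWeight_true (d x : ℤ) : filterWeight d x true = 1 := by
  simp [filterWeight]

lemma filterWeight_false (d x : ℤ) :
    filterWeight d x false = if x = d then 0 else if x = d + 1 then 2 else 1 := by
  simp [filterWeight]

theorem walkSum_filterWeight {d : ℤ} (hd : 0 < d) (N : ℕ) (x : ℤ) :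
    walkSum (filterWeight d) N x =
      if d ≤ x then freePathCount N x else freePathCount N x - freePathCount N (2 * d - x) := by
  induction N generalizing x with
  | zero =>
    simp only [walkSum_zero, freePathCount_zero]
    split_ifs <;> omega
  | succ N ih =>
    rw [walkSum_succ, ih, ih, freePathCount_succ, freePathCount_succ, filterWeight_true,
      filterWeight_false, show 2 * d - (x - 1) = 2 * d - x + 1 by ring,
      show 2 * d - (x + 1) = 2 * d - x - 1 by ring]
    obtain hx | hx | hx | hx : x < d - 1 ∨ x = d - 1 ∨ x = d ∨ d < x := by omega
    · simp only [if_neg (by omega : ¬ d ≤ x - 1), if_neg (by omega : ¬ d ≤ x + 1),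
        if_neg (by omega : ¬ d ≤ x), if_neg (by omega : x + 1 ≠ d),
        if_neg (by omega : x + 1 ≠ d + 1)]
      ring
    · simp only [if_neg (by omega : ¬ d ≤ x - 1), if_pos (by omega : x + 1 = d),
        if_neg (by omega : ¬ d ≤ x), show 2 * d - x - 1 = x + 1 by omega]
      ring
    · simp only [if_neg (by omega : ¬ d ≤ x - 1), if_pos (by omega : d ≤ x + 1),
        if_pos (by omega : d ≤ x), if_neg (by omega : x + 1 ≠ d),
        if_pos (by omega : x + 1 = d + 1), show 2 * d - x + 1 = x + 1 by omega]
      ring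
    · simp only [if_pos (by omega : d ≤ x - 1), if_pos (by omega : d ≤ x + 1),
        if_pos (by omega : d ≤ x), if_neg (by omega : x + 1 ≠ d),
        if_neg (by omega : x + 1 ≠ d + 1)]
      ring

lemma finsum_admissible_eq_walkSum (d M : ℤ) (N : ℕ) :
    (∑ᶠ s ∈ {s : Fin N → Bool |
        pathPos s N = M ∧ ∀ i : Fin N, pathPos s i.val = d → s i = true},
      pathWeight (fun x b => if x = d + 1 ∧ b = false then 2 else 1) s) =
      walkSum (filterWeight d) N M := by
  classical
  rw [finsum_mem_eq_toFinset_sum, Set.toFinset_ofPred, ← filter_filter, sum_filter, walkSum]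
  refine sum_congr (by congr) fun s _ => ?_
  unfold filterWeight
  rw [pathWeight_ite_zero]
  simp

/-- For `d > 0` and `M ≥ d`, the weighted number of lattice paths from `(0,0)` to `(M,N)` with a
type-1 filter at `x = d` (step `(d,y)→(d-1,y+1)` forbidden, step `(d+1,y)→(d,y+1)` of weight 2,
all other steps of weight 1) equals `binom N ((N-M)/2)`. -/
theorem filter_type1_right_weighted_count (d M : ℤ) (N : ℕ) (hd : 0 < d) (hM : d ≤ M)
    (h2 : (N : ℤ) ≡ M [ZMOD 2]) :
    (∑ᶠ s ∈ {s : Fin N → Bool |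
        pathPos s N = M ∧ ∀ i : Fin N, pathPos s i.val = d → s i = true},
      pathWeight (fun x b => if x = d + 1 ∧ b = false then 2 else 1) s) =
      ibinom N (((N : ℤ) - M) / 2) := by
  rw [finsum_admissible_eq_walkSum, walkSum_filterWeight hd, if_pos hM, freePathCount,
    if_pos (Int.emod_eq_zero_of_dvd h2.symm.dvd)]
end

section
/- Define for j ≥ 2 and k ≥ 0: P_j(k) = Σ_{i=0}^{⌊j/2⌋} binom(j-2, 2i)·binom(k-i+j-2, j-2) and Q_j(k) = Σ_{i=0}^{⌊j/2⌋} binom(j-2, 2i+1)·binom(k-i+j-2, j-2), with out-of-range binomial coefficients equal to 0. Then P_{j+1}(k) = Σ_{n=0}^{k} P_j(n) + Σ_{n=0}^{k-1} Q_j(n). -/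
open Finset

/-- Binomial coefficient `binom a b` of integers, equal to `0` when `a < 0`, `b < 0`
or `b > a`. -/
def B (a b : ℤ) : ℤ :=
  if 0 ≤ a ∧ 0 ≤ b then (a.toNat.choose b.toNat : ℤ) else 0

/-- `P_j(k) = Σ_{i=0}^{⌊j/2⌋} binom(j-2, 2i) · binom(k-i+j-2, j-2)`. -/
def P (j : ℕ) (k : ℤ) : ℤ :=
  ∑ i ∈ Finset.range (j / 2 + 1),
    B ((j : ℤ) - 2) (2 * i) * B (k - i + j - 2) ((j : ℤ) - 2)

/-- `Q_j(k) = Σ_{i=0}^{⌊j/2⌋} binom(j-2, 2i+1) · binom(k-i+j-2, j-2)`. -/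
def Q (j : ℕ) (k : ℤ) : ℤ :=
  ∑ i ∈ Finset.range (j / 2 + 1),
    B ((j : ℤ) - 2) (2 * i + 1) * B (k - i + j - 2) ((j : ℤ) - 2)

lemma B_zero_of_neg {a b : ℤ} (h : b < 0) : B a b = 0 := by
  unfold B
  rw [if_neg (by omega)]

lemma B_zero_of_lt {a b : ℤ} (h : a < b) : B a b = 0 := by
  unfold B
  split
  · next h' =>
    norm_cast
    apply Nat.choose_eq_zero_of_lt
    omega
  · rfl

lemma B_pascal {a b : ℤ} (hb : 0 ≤ b) : B (a + 1) (b + 1) = B a b + B a (b + 1) := by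
  rcases le_or_gt 0 a with ha | ha
  · unfold B
    rw [if_pos ⟨by omega, by omega⟩, if_pos ⟨ha, hb⟩, if_pos ⟨ha, by omega⟩]
    rw [show (a + 1).toNat = a.toNat + 1 by omega, show (b + 1).toNat = b.toNat + 1 by omega]
    rw [Nat.choose_succ_succ]
    push_cast; ring
  · have h1 : B a b = 0 := by unfold B; rw [if_neg (by omega)]
    have h2 : B a (b + 1) = 0 := by unfold B; rw [if_neg (by omega)]
    have h3 : B (a + 1) (b + 1) = 0 := by
      unfold B
      split
      · next h' =>
        rw [show a + 1 = 0 by omega]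
        rw [show (b + 1).toNat = b.toNat + 1 by omega]
        norm_num [Nat.choose_eq_zero_of_lt]
      · rfl
    rw [h1, h2, h3]; ring

lemma hockey (m : ℕ) (c : ℤ) (hc : c ≤ m) :
    ∀ k : ℤ, -1 ≤ k →
      ∑ n ∈ Finset.Icc (0 : ℤ) k, B (n + c) m = B (k + c + 1) ((m : ℤ) + 1) := by
  refine Int.le_induction ?_ ?_
  · rw [show (-1 : ℤ) + c + 1 = c by ring]
    rw [show Finset.Icc (0 : ℤ) (-1) = ∅ by apply Finset.Icc_eq_empty; omega]
    rw [B_zero_of_lt (by omega)]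
    simp
  · intro n hn ih
    rw [show Finset.Icc (0 : ℤ) (n + 1) = insert (n + 1) (Finset.Icc 0 n) by
        ext x; simp only [Finset.mem_insert, Finset.mem_Icc]; omega]
    rw [Finset.sum_insert (by simp)]
    rw [ih, show n + 1 + c = (n + c + 1 : ℤ) by ring]
    conv_rhs => rw [B_pascal (show (0 : ℤ) ≤ (m : ℤ) by positivity)]

lemma innerB (m : ℕ) (i : ℕ) (k : ℤ) (hk : -1 ≤ k) :
    ∑ n ∈ Finset.Icc (0 : ℤ) k, B (n - i + m) m = B (k - i + m + 1) ((m : ℤ) + 1) := by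
  rw [show (k - i + m + 1 : ℤ) = k + ((m : ℤ) - i) + 1 by ring,
    ← hockey m ((m : ℤ) - i) (by omega) k hk]
  exact Finset.sum_congr rfl fun n _ => by
    rw [show (n - i + m : ℤ) = n + ((m : ℤ) - i) by ring]

lemma P_eq (m : ℕ) (x : ℤ) :
    P (m + 2) x = ∑ i ∈ Finset.range (m / 2 + 2),
      B m (2 * i) * B (x - i + m) m := by
  unfold P
  rw [show (m + 2) / 2 + 1 = m / 2 + 2 by omega]
  refine Finset.sum_congr rfl fun i _ => ?_
  push_cast
  ring_nf

lemma Q_eq (m : ℕ) (x : ℤ) :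
    Q (m + 2) x = ∑ i ∈ Finset.range (m / 2 + 2),
      B m (2 * i + 1) * B (x - i + m) m := by
  unfold Q
  rw [show (m + 2) / 2 + 1 = m / 2 + 2 by omega]
  refine Finset.sum_congr rfl fun i _ => ?_
  push_cast
  ring_nf

lemma P3_eq (m : ℕ) (x : ℤ) :
    P (m + 3) x = ∑ i ∈ Finset.range ((m + 1) / 2 + 2),
      B ((m : ℤ) + 1) (2 * i) * B (x - i + m + 1) ((m : ℤ) + 1) := by
  unfold P
  rw [show (m + 3) / 2 + 1 = (m + 1) / 2 + 2 by omega]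
  refine Finset.sum_congr rfl fun i _ => ?_
  push_cast
  ring_nf

lemma pascal_even (m : ℕ) (i : ℕ) :
    B ((m : ℤ) + 1) (2 * i) = B m (2 * i) + B m (2 * i - 1) := by
  cases i with
  | zero => norm_num [B]; positivity
  | succ n =>
    have h := B_pascal (a := (m : ℤ)) (b := 2 * n + 1) (by positivity)
    push_cast
    rw [show ((2 : ℤ) * (n + 1)) = (2 * n + 1) + 1 by ring,
      show ((2 : ℤ) * n + 1 + 1) - 1 = 2 * n + 1 by ring] at *
    rw [h]; ring

/-- The recurrence `P_{j+1}(k) = Σ_{n=0}^{k} P_j(n) + Σ_{n=0}^{k-1} Q_j(n)`. -/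
theorem P_recurrence (j : ℕ) (k : ℤ) (hj : 2 ≤ j) (hk : 0 ≤ k) :
    P (j + 1) k = (∑ n ∈ Finset.Icc (0 : ℤ) k, P j n)
      + ∑ n ∈ Finset.Icc (0 : ℤ) (k - 1), Q j n := by
  obtain ⟨m, rfl⟩ : ∃ m, j = m + 2 := ⟨j - 2, by omega⟩
  rw [show m + 2 + 1 = m + 3 from rfl, P3_eq]
  have hsum1 : ∑ n ∈ Finset.Icc (0 : ℤ) k, P (m + 2) n
      = ∑ i ∈ Finset.range ((m + 1) / 2 + 2),
          B m (2 * i) * B (k - i + m + 1) ((m : ℤ) + 1) := by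
    calc ∑ n ∈ Finset.Icc (0 : ℤ) k, P (m + 2) n
        = ∑ n ∈ Finset.Icc (0 : ℤ) k, ∑ i ∈ Finset.range ((m + 1) / 2 + 2),
            B m (2 * i) * B (n - i + m) m := by
          refine Finset.sum_congr rfl fun n _ => ?_
          rw [P_eq]
          apply Finset.sum_subset
          · apply Finset.range_subset_range.2; omega
          · intro i _ hi
            simp only [Finset.mem_range, not_lt] at hi
            rw [B_zero_of_lt (show (m : ℤ) < 2 * i by omega), zero_mul]
      _ = ∑ i ∈ Finset.range ((m + 1) / 2 + 2), ∑ n ∈ Finset.Icc (0 : ℤ) k,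
            B m (2 * i) * B (n - i + m) m := Finset.sum_comm
      _ = _ := by
          refine Finset.sum_congr rfl fun i _ => ?_
          rw [← Finset.mul_sum, innerB m i k (by omega)]
  have hsum2 : ∑ n ∈ Finset.Icc (0 : ℤ) (k - 1), Q (m + 2) n
      = ∑ i ∈ Finset.range ((m + 1) / 2 + 2),
          B m (2 * i + 1) * B (k - i + m) ((m : ℤ) + 1) := by
    calc ∑ n ∈ Finset.Icc (0 : ℤ) (k - 1), Q (m + 2) n
        = ∑ n ∈ Finset.Icc (0 : ℤ) (k - 1), ∑ i ∈ Finset.range ((m + 1) / 2 + 2),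
            B m (2 * i + 1) * B (n - i + m) m := by
          refine Finset.sum_congr rfl fun n _ => ?_
          rw [Q_eq]
          apply Finset.sum_subset
          · apply Finset.range_subset_range.2; omega
          · intro i _ hi
            simp only [Finset.mem_range, not_lt] at hi
            rw [B_zero_of_lt (show (m : ℤ) < 2 * i + 1 by omega), zero_mul]
      _ = ∑ i ∈ Finset.range ((m + 1) / 2 + 2), ∑ n ∈ Finset.Icc (0 : ℤ) (k - 1),
            B m (2 * i + 1) * B (n - i + m) m := Finset.sum_comm
      _ = _ := by
          refine Finset.sum_congr rfl fun i _ => ?_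
          rw [← Finset.mul_sum, innerB m i (k - 1) (by omega),
            show k - 1 - (i : ℤ) + (m : ℤ) + 1 = k - (i : ℤ) + m by ring]
  rw [hsum1, hsum2]
  have key : ∑ i ∈ Finset.range ((m + 1) / 2 + 2),
        B m (2 * i - 1) * B (k - i + m + 1) ((m : ℤ) + 1)
      = ∑ i ∈ Finset.range ((m + 1) / 2 + 2),
        B m (2 * i + 1) * B (k - i + m) ((m : ℤ) + 1) := by
    rw [show (m + 1) / 2 + 2 = ((m + 1) / 2 + 1) + 1 from rfl]
    rw [Finset.sum_range_succ'
      (fun i : ℕ => B m (2 * i - 1) * B (k - i + m + 1) ((m : ℤ) + 1)) ((m + 1) / 2 + 1)]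
    rw [Finset.sum_range_succ
      (fun i : ℕ => B m (2 * i + 1) * B (k - i + m) ((m : ℤ) + 1)) ((m + 1) / 2 + 1)]
    rw [B_zero_of_neg (show ((2 : ℤ) * ((0 : ℕ) : ℤ) - 1) < 0 by norm_num)]
    rw [B_zero_of_lt
      (show (m : ℤ) < 2 * (((m + 1) / 2 + 1 : ℕ) : ℤ) + 1 by push_cast; omega)]
    rw [zero_mul, zero_mul, add_zero, add_zero]
    refine Finset.sum_congr rfl fun i _ => ?_
    push_cast
    ring_nf
  have lhs_split : ∀ i : ℕ, B ((m : ℤ) + 1) (2 * i) * B (k - i + m + 1) ((m : ℤ) + 1)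
      = B m (2 * i) * B (k - i + m + 1) ((m : ℤ) + 1)
        + B m (2 * i - 1) * B (k - i + m + 1) ((m : ℤ) + 1) := by
    intro i
    rw [pascal_even]; ring
  rw [Finset.sum_congr rfl fun i _ => lhs_split i, Finset.sum_add_distrib, key]
end
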